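/- arXiv:0803.2592 — 4 statements merged into one kernel-verified Lean document; each statement's English description precedes it below -/
import Mathlib

section
/- Let G be a group acting by isometries on a nonempty complete metric space (X,d), let S be a finite subset of G, and set δ(x) = max_{s∈S} d(x, s·x). If the action has no point fixed by all elements of S (i.e. δ(x) > 0 for all x ∈ X), then for every positive natural number n there exists a point x_n ∈ X such that every y ∈ X with d(y, x_n) ≤ n·δ(x_n) satisfies δ(y) ≥ δ(x_n)/2. -/
/-!
Suppose no point works. Then every `x` has a neighbour `f x` within distance `C * δ x` with
`δ (f x) < c * δ x`. Iterating `f` from any point, `δ` decays geometrically, hence so do the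
steps, and the orbit is Cauchy. Its limit `x` then lies in every closed sublevel set
`{δ ≤ ε}` with `ε > 0`, which is absurd once `ε < δ x`. The displacement function of an
isometric action is continuous, so this applies to it with `c = 1/2` and `C = n`.
-/

open Filter Topology

section Descent

variable {X : Type*} {δ : X → ℝ} {c C : ℝ} {f : X → X}

theorem iterate_le_pow_mul (hc : 0 ≤ c) (hf : ∀ x, δ (f x) ≤ c * δ x) (x : X) (k : ℕ) :
    δ (f^[k] x) ≤ c ^ k * δ x := by
  induction k with
  | zero => simp
  | succ k ih =>
    calc δ (f^[k + 1] x) = δ (f (f^[k] x)) := by rw [Function.iterate_succ_apply']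
      _ ≤ c * δ (f^[k] x) := hf _
      _ ≤ c * (c ^ k * δ x) := mul_le_mul_of_nonneg_left ih hc
      _ = c ^ (k + 1) * δ x := by ring

variable [PseudoMetricSpace X]

theorem cauchySeq_iterate_of_le_mul (hc₀ : 0 ≤ c) (hc₁ : c < 1) (hC : 0 ≤ C)
    (hf : ∀ x, δ (f x) ≤ c * δ x) (hfC : ∀ x, dist x (f x) ≤ C * δ x) (x : X) :
    CauchySeq fun k ↦ f^[k] x := by
  refine cauchySeq_of_le_geometric c (C * δ x) hc₁ fun k ↦ ?_
  calc dist (f^[k] x) (f^[k + 1] x) = dist (f^[k] x) (f (f^[k] x)) := by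
        rw [Function.iterate_succ_apply']
    _ ≤ C * δ (f^[k] x) := hfC _
    _ ≤ C * (c ^ k * δ x) := mul_le_mul_of_nonneg_left (iterate_le_pow_mul hc₀ hf x k) hC
    _ = C * δ x * c ^ k := by ring

theorem LowerSemicontinuous.exists_forall_dist_le_mul_imp_mul_le [CompleteSpace X] [Nonempty X]
    (hδ : LowerSemicontinuous δ) (hpos : ∀ x, 0 < δ x) (hc₀ : 0 ≤ c) (hc₁ : c < 1)
    (hC : 0 ≤ C) : ∃ x, ∀ y, dist y x ≤ C * δ x → c * δ x ≤ δ y := by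
  by_contra! h
  choose f hfC hf using h
  obtain ⟨x₀⟩ := ‹Nonempty X›
  obtain ⟨x, hx⟩ := cauchySeq_tendsto_of_complete <| cauchySeq_iterate_of_le_mul hc₀ hc₁ hC
    (fun x ↦ (hf x).le) (fun x ↦ dist_comm x (f x) ▸ hfC x) x₀
  have hgeom : Tendsto (fun k ↦ c ^ k * δ x₀) atTop (𝓝 0) := by
    simpa using (tendsto_pow_atTop_nhds_zero_of_lt_one hc₀ hc₁).mul_const (δ x₀)
  have hsmall : ∀ᶠ k in atTop, f^[k] x₀ ∈ δ ⁻¹' Set.Iic (δ x / 2) :=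
    (hgeom.eventually (ge_mem_nhds (half_pos (hpos x)))).mono fun k hk ↦
      (iterate_le_pow_mul hc₀ (fun x ↦ (hf x).le) x₀ k).trans hk
  have hx_small : δ x ≤ δ x / 2 := (hδ.isClosed_preimage _).mem_of_tendsto hx hsmall
  linarith [hpos x]

end Descent

theorem continuous_finset_sup'_dist_smul {G X : Type*} [PseudoMetricSpace X] [SMul G X]
    [ContinuousConstSMul G X] (S : Finset G) (hS : S.Nonempty) :
    Continuous fun x : X ↦ S.sup' hS fun s ↦ dist x (s • x) :=
  Continuous.finset_sup'_apply hS fun s _ ↦ continuous_id.dist (continuous_const_smul s)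

theorem key_lemma_general {G X : Type*} [Group G] [MetricSpace X] [Nonempty X] [CompleteSpace X]
    [MulAction G X]
    (hiso : ∀ g : G, Isometry (fun x : X => g • x))
    (S : Finset G) (hS : S.Nonempty)
    (δ : X → ℝ) (hδ : ∀ x, δ x = S.sup' hS (fun s => dist x (s • x)))
    (hpos : ∀ x : X, 0 < δ x)
    (n : ℕ) :
    ∃ x : X, ∀ y : X, dist y x ≤ (n : ℝ) * δ x → δ x / 2 ≤ δ y := by
  have : IsIsometricSMul G X := ⟨hiso⟩
  have hδ_cont : Continuous δ := funext hδ ▸ continuous_finset_sup'_dist_smul S hS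
  obtain ⟨x, hx⟩ := hδ_cont.lowerSemicontinuous.exists_forall_dist_le_mul_imp_mul_le hpos
    (by norm_num : (0 : ℝ) ≤ 1 / 2) (by norm_num) n.cast_nonneg
  exact ⟨x, fun y hy ↦ by linarith [hx y hy]⟩

/-- key lemma. If a group G acts by isometries on a nonempty complete metric
space with no point fixed by all elements of the finite set S (δ(x) > 0 for all x), then
for every n ≥ 1 there is a point x_n such that every y with d(y,x_n) ≤ n·δ(x_n) satisfies
δ(y) ≥ δ(x_n)/2. -/
theorem key_lemma {G X : Type*} [Group G] [MetricSpace X] [Nonempty X] [CompleteSpace X]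
    [MulAction G X]
    (hiso : ∀ g : G, Isometry (fun x : X => g • x))
    (S : Finset G) (hS : S.Nonempty)
    (δ : X → ℝ) (hδ : ∀ x, δ x = S.sup' hS (fun s => dist x (s • x)))
    (hpos : ∀ x : X, 0 < δ x)
    (n : ℕ) (hn : 0 < n) :
    ∃ x : X, ∀ y : X, dist y x ≤ (n : ℝ) * δ x → δ x / 2 ≤ δ y :=
  key_lemma_general hiso S hS δ hδ hpos n
end

section
/- Let (X,d) be a nonempty complete metric space and δ : X → ℝ a 2-Lipschitz nonnegative function with δ(x) > 0 for all x. If there exists n ≥ 1 such that for every x ∈ X there is y ∈ X with d(y,x) ≤ n·δ(x) and δ(y) < δ(x)/2, then one obtains a contradiction; equivalently, for some x ∈ X, every y with d(y,x) ≤ n·δ(x) satisfies δ(y) ≥ δ(x)/2. -/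
/-!
Iterating a step `x ↦ y` that moves by at most `n δ(x)` while halving `δ` gives a sequence whose
steps shrink geometrically, hence a Cauchy sequence. Its limit exists by completeness, and since
`δ` is continuous (being Lipschitz) and halves at every step, `δ` vanishes at the limit.
-/

open Filter Topology

section IterateShrinking

variable {X : Type*} {δ : X → ℝ} {f : X → X} {C r : ℝ}

theorem le_pow_mul_of_map_le_mul (hr : 0 ≤ r) (hf : ∀ x, δ (f x) ≤ r * δ x) (x : X) (k : ℕ) :
    δ (f^[k] x) ≤ r ^ k * δ x := by
  induction k with
  | zero => simp
  | succ k ih =>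
    rw [Function.iterate_succ_apply']
    calc δ (f (f^[k] x)) ≤ r * δ (f^[k] x) := hf _
      _ ≤ r * (r ^ k * δ x) := mul_le_mul_of_nonneg_left ih hr
      _ = r ^ (k + 1) * δ x := by ring

theorem cauchySeq_iterate_of_dist_le_of_map_le_mul [MetricSpace X] (hr₀ : 0 ≤ r) (hr₁ : r < 1)
    (hC : 0 ≤ C) (hdist : ∀ x, dist (f x) x ≤ C * δ x) (hf : ∀ x, δ (f x) ≤ r * δ x)
    (x : X) : CauchySeq fun k => f^[k] x := by
  refine cauchySeq_of_le_geometric r (C * δ x) hr₁ fun k => ?_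
  rw [dist_comm, Function.iterate_succ_apply']
  calc dist (f (f^[k] x)) (f^[k] x) ≤ C * δ (f^[k] x) := hdist _
    _ ≤ C * (r ^ k * δ x) :=
      mul_le_mul_of_nonneg_left (le_pow_mul_of_map_le_mul hr₀ hf x k) hC
    _ = C * δ x * r ^ k := by ring

theorem exists_eq_zero_of_dist_le_of_map_le_mul [MetricSpace X] [CompleteSpace X]
    (hδ : Continuous δ) (hδ₀ : ∀ x, 0 ≤ δ x) (hr₀ : 0 ≤ r) (hr₁ : r < 1) (hC : 0 ≤ C)
    (hdist : ∀ x, dist (f x) x ≤ C * δ x) (hf : ∀ x, δ (f x) ≤ r * δ x) (x : X) :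
    ∃ p, δ p = 0 := by
  obtain ⟨p, hp⟩ := cauchySeq_tendsto_of_complete
    (cauchySeq_iterate_of_dist_le_of_map_le_mul hr₀ hr₁ hC hdist hf x)
  have hδp : Tendsto (fun k => δ (f^[k] x)) atTop (𝓝 (δ p)) := (hδ.tendsto p).comp hp
  have hδ0 : Tendsto (fun k => δ (f^[k] x)) atTop (𝓝 0) := by
    refine squeeze_zero (fun k => hδ₀ _) (le_pow_mul_of_map_le_mul hr₀ hf x) ?_
    simpa using (tendsto_pow_atTop_nhds_zero_of_lt_one hr₀ hr₁).mul_const (δ x)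
  exact ⟨p, tendsto_nhds_unique hδp hδ0⟩

end IterateShrinking

theorem abstract_key_lemma_general {X : Type*} [MetricSpace X] [Nonempty X] [CompleteSpace X]
    (δ : X → ℝ)
    (hlip : ∀ x y : X, |δ x - δ y| ≤ 2 * dist x y)
    (hpos : ∀ x : X, 0 < δ x)
    (n : ℕ) :
    (¬ ∀ x : X, ∃ y : X, dist y x ≤ (n : ℝ) * δ x ∧ δ y < δ x / 2) ∧
    (∃ x : X, ∀ y : X, dist y x ≤ (n : ℝ) * δ x → δ x / 2 ≤ δ y) := by
  have hδ : LipschitzWith 2 δ :=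
    LipschitzWith.of_dist_le_mul fun x y => by simpa [Real.dist_eq] using hlip x y
  have key : ¬ ∀ x : X, ∃ y : X, dist y x ≤ (n : ℝ) * δ x ∧ δ y < δ x / 2 := by
    intro h
    choose f hdist hhalf using h
    obtain ⟨p, hp⟩ := exists_eq_zero_of_dist_le_of_map_le_mul hδ.continuous
      (fun x => (hpos x).le) (r := 1 / 2) (by norm_num) (by norm_num) n.cast_nonneg hdist
      (fun x => by linarith [hhalf x]) (Classical.arbitrary X)
    exact (hpos p).ne' hp
  refine ⟨key, ?_⟩
  by_contra hc
  push Not at hc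
  exact key hc

/-- abstract key lemma. (X,d) nonempty complete, δ 2-Lipschitz, nonnegative
and everywhere positive. Then it is impossible that for some n ≥ 1 every x admits y with
d(y,x) ≤ n·δ(x) and δ(y) < δ(x)/2; equivalently there is x such that every y with
d(y,x) ≤ n·δ(x) satisfies δ(y) ≥ δ(x)/2. -/
theorem abstract_key_lemma {X : Type*} [MetricSpace X] [Nonempty X] [CompleteSpace X]
    (δ : X → ℝ)
    (hlip : ∀ x y : X, |δ x - δ y| ≤ 2 * dist x y)
    (hnn : ∀ x : X, 0 ≤ δ x)
    (hpos : ∀ x : X, 0 < δ x)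
    (n : ℕ) (hn : 1 ≤ n) :
    (¬ ∀ x : X, ∃ y : X, dist y x ≤ (n : ℝ) * δ x ∧ δ y < δ x / 2) ∧
    (∃ x : X, ∀ y : X, dist y x ≤ (n : ℝ) * δ x → δ x / 2 ≤ δ y) :=
  abstract_key_lemma_general δ hlip hpos n
end

section
/- The ℤ-action by isometries on the Hilbert space ℓ²(ℤ) generated by the affine map ξ ↦ Sξ + δ₀ (where S is the bilateral shift (Sξ)(n) = ξ(n−1) and δ₀ is the Dirac mass at 0) almost has fixed points but is metrically proper; in particular it has no global fixed point. -/
/-!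
The generator `ξ ↦ Sξ + δ₀` is an isometry, hence so is every `A g`, and the triangle inequality
along the orbit gives `dist (A g ξ) ξ ≤ |g| * dist (A 1 ξ) ξ`. For the ramp
`ξ_N = (N - k) / N` on `[0, N]` the displacement `A 1 ξ_N - ξ_N` equals `1 / N` on `[1, N]`,
so it has norm `N^(-1/2)`: the action almost has fixed points. On the other hand `A n 0` is the
indicator of `[0, n)`, so `‖A g 0‖ ^ 2 = |g|`, which is properness at `0`; moving the base point
from `0` to `ξ` changes `dist (A g ·) ·` by at most `2 ‖ξ‖`. A proper action of the infinite
group `ℤ` has no fixed point.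
-/

open Filter Topology Finset
open scoped lp

namespace lp

variable {ι : Type*}

theorem norm_sq_eq_tsum (f : ℓ²(ι, ℝ)) : ‖f‖ ^ 2 = ∑' i, f i ^ 2 := by
  rw [← real_inner_self_eq_norm_sq, lp.inner_eq_tsum]
  simp only [real_inner_self_eq_norm_sq, Real.norm_eq_abs, sq_abs]

theorem norm_sq_eq_of_forall_eq_ite [DecidableEq ι] (s : Finset ι) (c : ℝ) (f : ℓ²(ι, ℝ))
    (hf : ∀ i, f i = if i ∈ s then c else 0) : ‖f‖ ^ 2 = #s * c ^ 2 := by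
  rw [norm_sq_eq_tsum, tsum_eq_sum (s := s) fun i hi => by rw [hf, if_neg hi, sq, zero_mul],
    Finset.sum_congr rfl fun i hi => by rw [hf, if_pos hi], sum_const, nsmul_eq_mul]

theorem norm_eq_of_forall_eq_comp {E : Type*} [NormedAddCommGroup E] {p : ENNReal}
    (hp : 0 < p.toReal) (e : ι ≃ ι) (f g : lp (fun _ : ι => E) p)
    (hfg : ∀ i, g i = f (e i)) : ‖g‖ = ‖f‖ := by
  rw [lp.norm_eq_tsum_rpow hp, lp.norm_eq_tsum_rpow hp, ← e.tsum_eq (fun i => ‖f i‖ ^ p.toReal)]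
  simp only [hfg]

end lp

section IsometricFamily

variable {G X : Type*} [PseudoMetricSpace X] {A : G → X → X} (hA : ∀ g, Isometry (A g))
include hA

theorem dist_act_le_dist_act_add (g : G) (x y : X) :
    dist (A g y) y ≤ dist (A g x) x + 2 * dist x y := by
  calc dist (A g y) y ≤ dist (A g y) (A g x) + dist (A g x) x + dist x y := dist_triangle4 _ _ _ _
    _ = dist (A g x) x + 2 * dist x y := by rw [(hA g).dist_eq, dist_comm y x]; ring

theorem finite_setOf_dist_act_le_of_forall {x : X}
    (hx : ∀ R, {g | dist (A g x) x ≤ R}.Finite) (y : X) (R : ℝ) :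
    {g | dist (A g y) y ≤ R}.Finite :=
  (hx (R + 2 * dist y x)).subset fun g (hg : dist (A g y) y ≤ R) =>
    (dist_act_le_dist_act_add hA g y x).trans (by linarith)

end IsometricFamily

section IntAction

variable {X : Type*} {A : ℤ → X → X} (h0 : ∀ x, A 0 x = x)
  (hadd : ∀ m n : ℤ, ∀ x, A (m + n) x = A m (A n x))
include h0 hadd

theorem act_act_neg (g : ℤ) (x : X) : A g (A (-g) x) = x := by
  rw [← hadd, add_neg_cancel, h0]

variable [PseudoMetricSpace X]

theorem isometry_act_natCast (h1 : Isometry (A 1)) (n : ℕ) : Isometry (A n) := by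
  induction n with
  | zero =>
    rw [Nat.cast_zero, show A 0 = id from funext h0]
    exact isometry_id
  | succ n ih =>
    rw [show A (n + 1 : ℕ) = A 1 ∘ A n from funext fun x => by
      rw [Function.comp_apply, ← hadd, Nat.cast_succ, add_comm]]
    exact h1.comp ih

theorem isometry_act (h1 : Isometry (A 1)) (g : ℤ) : Isometry (A g) := by
  obtain ⟨n, rfl | rfl⟩ := Int.eq_nat_or_neg g
  · exact isometry_act_natCast h0 hadd h1 n
  · refine Isometry.of_dist_eq fun x y => ?_
    rw [← (isometry_act_natCast h0 hadd h1 n).dist_eq, act_act_neg h0 hadd, act_act_neg h0 hadd]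

variable (hA : ∀ g, Isometry (A g))
include hA

theorem dist_act_neg (g : ℤ) (x : X) : dist (A (-g) x) x = dist (A g x) x := by
  rw [← (hA g).dist_eq, act_act_neg h0 hadd, dist_comm]

theorem dist_act_natCast_le (n : ℕ) (x : X) : dist (A n x) x ≤ n * dist (A 1 x) x := by
  induction n with
  | zero => simp [h0]
  | succ n ih =>
    calc dist (A (n + 1 : ℕ) x) x ≤ dist (A n (A 1 x)) (A n x) + dist (A n x) x := by
          rw [Nat.cast_succ, hadd]; exact dist_triangle _ _ _
      _ ≤ (n + 1 : ℕ) * dist (A 1 x) x := by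
          rw [(hA n).dist_eq]; push_cast; linarith

theorem dist_act_le (g : ℤ) (x : X) : dist (A g x) x ≤ |g| * dist (A 1 x) x := by
  obtain ⟨n, rfl | rfl⟩ := Int.eq_nat_or_neg g
  · simpa using dist_act_natCast_le h0 hadd hA n x
  · simpa [dist_act_neg h0 hadd hA] using dist_act_natCast_le h0 hadd hA n x

theorem exists_forall_dist_act_lt_of_tendsto {ξ : ℕ → X}
    (hξ : Tendsto (fun N => dist (A 1 (ξ N)) (ξ N)) atTop (𝓝 0)) {ε : ℝ} (hε : 0 < ε)
    (F : Finset ℤ) : ∃ x, ∀ g ∈ F, dist (A g x) x < ε := by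
  have htends (g : ℤ) : Tendsto (fun N => dist (A g (ξ N)) (ξ N)) atTop (𝓝 0) :=
    squeeze_zero (fun _ => dist_nonneg) (fun N => dist_act_le h0 hadd hA g (ξ N))
      (by simpa using hξ.const_mul (|g| : ℝ))
  obtain ⟨N, hN⟩ :=
    ((eventually_all_finset F).2 fun g _ => (htends g).eventually (gt_mem_nhds hε)).exists
  exact ⟨ξ N, hN⟩

end IntAction

noncomputable def ramp (N : ℕ) (k : ℤ) : ℝ := if k ∈ Icc 0 (N : ℤ) then (N - k) / N else 0

theorem memℓp_ramp (N : ℕ) (p : ENNReal) : Memℓp (ramp N) p :=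
  (memℓp_zero ((Icc 0 (N : ℤ)).finite_toSet.subset fun k hk => by
    by_contra h; exact hk (if_neg h))).of_exponent_ge bot_le

noncomputable def rampLp (N : ℕ) : ℓ²(ℤ, ℝ) := ⟨ramp N, memℓp_ramp N 2⟩

section ShiftAction

variable {A : ℤ → ℓ²(ℤ, ℝ) → ℓ²(ℤ, ℝ)}
  (h1 : ∀ (ξ : ℓ²(ℤ, ℝ)) (n : ℤ), (A 1 ξ : ℤ → ℝ) n = ξ (n - 1) + if n = 0 then 1 else 0)
include h1

theorem shift_act_one_sub_apply (ξ η : ℓ²(ℤ, ℝ)) (n : ℤ) :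
    (A 1 ξ - A 1 η : ℓ²(ℤ, ℝ)) n = (ξ - η : ℓ²(ℤ, ℝ)) (n - 1) := by
  simp only [lp.coeFn_sub, Pi.sub_apply, h1]
  ring

theorem shift_act_natCast_zero_apply (h0 : ∀ ξ, A 0 ξ = ξ)
    (hadd : ∀ m n : ℤ, ∀ ξ, A (m + n) ξ = A m (A n ξ)) (n : ℕ) (k : ℤ) :
    (A n 0 : ℤ → ℝ) k = if k ∈ Ico 0 (n : ℤ) then 1 else 0 := by
  induction n generalizing k with
  | zero => simp [h0]
  | succ n ih =>
    rw [Nat.cast_succ, add_comm, hadd, h1, ih]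
    simp only [mem_Ico]
    split_ifs <;> first | omega | norm_num

theorem shift_act_one_rampLp_sub_apply {N : ℕ} (hN : 0 < N) (n : ℤ) :
    (A 1 (rampLp N) - rampLp N : ℓ²(ℤ, ℝ)) n = if n ∈ Icc 1 (N : ℤ) then 1 / (N : ℝ) else 0 := by
  simp only [lp.coeFn_sub, Pi.sub_apply, h1, rampLp]
  rcases eq_or_ne n 0 with rfl | hn0
  · simp [ramp, hN.ne']
  rcases eq_or_ne n (N + 1) with rfl | hnN
  · simp [ramp, hn0]
  simp only [ramp, mem_Icc, if_neg hn0, add_zero]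
  split_ifs <;> first | omega | (push_cast; field_simp; ring)

theorem isometry_shift_act_one : Isometry (A 1) :=
  Isometry.of_dist_eq fun ξ η => by
    rw [dist_eq_norm, dist_eq_norm]
    exact lp.norm_eq_of_forall_eq_comp (by norm_num) (Equiv.subRight 1) _ _
      (shift_act_one_sub_apply h1 ξ η)

theorem dist_shift_act_one_rampLp_sq {N : ℕ} (hN : 0 < N) :
    dist (A 1 (rampLp N)) (rampLp N) ^ 2 = 1 / N := by
  rw [dist_eq_norm, lp.norm_sq_eq_of_forall_eq_ite _ _ _ (shift_act_one_rampLp_sub_apply h1 hN),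
    Int.card_Icc, add_sub_cancel_right, Int.toNat_natCast]
  field_simp

theorem tendsto_dist_shift_act_one_rampLp :
    Tendsto (fun N => dist (A 1 (rampLp N)) (rampLp N)) atTop (𝓝 0) := by
  have hsqrt : Tendsto (fun N : ℕ => √(1 / N)) atTop (𝓝 0) := by
    simpa using tendsto_one_div_atTop_nhds_zero_nat.sqrt
  refine hsqrt.congr' ((eventually_gt_atTop 0).mono fun N hN => ?_)
  rw [← dist_shift_act_one_rampLp_sq h1 hN, Real.sqrt_sq dist_nonneg]

variable (h0 : ∀ ξ, A 0 ξ = ξ) (hadd : ∀ m n : ℤ, ∀ ξ, A (m + n) ξ = A m (A n ξ))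
include h0 hadd

theorem norm_shift_act_natCast_zero_sq (n : ℕ) : ‖A n 0‖ ^ 2 = n := by
  rw [lp.norm_sq_eq_of_forall_eq_ite _ _ _ (shift_act_natCast_zero_apply h1 h0 hadd n),
    Int.card_Ico, sub_zero, Int.toNat_natCast, one_pow, mul_one]

theorem norm_shift_act_zero_sq (g : ℤ) : ‖A g 0‖ ^ 2 = |(g : ℝ)| := by
  obtain ⟨n, rfl | rfl⟩ := Int.eq_nat_or_neg g
  · simp [norm_shift_act_natCast_zero_sq h1 h0 hadd]
  · rw [← dist_zero_right, dist_act_neg h0 hadd (isometry_act h0 hadd (isometry_shift_act_one h1)),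
      dist_zero_right, norm_shift_act_natCast_zero_sq h1 h0 hadd]
    simp

theorem finite_setOf_dist_shift_act_zero_le (R : ℝ) : {g | dist (A g 0) 0 ≤ R}.Finite := by
  refine (Set.finite_Icc (-⌈R ^ 2⌉) ⌈R ^ 2⌉).subset fun g (hg : dist (A g 0) 0 ≤ R) => ?_
  have habs : |(g : ℝ)| ≤ R ^ 2 := by
    rw [← norm_shift_act_zero_sq h1 h0 hadd, ← dist_zero_right]
    exact pow_le_pow_left₀ dist_nonneg hg 2
  have : |g| ≤ ⌈R ^ 2⌉ := Int.cast_le.1 ((Int.cast_abs (R := ℝ) ▸ habs).trans (Int.le_ceil _))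
  exact abs_le.1 this

end ShiftAction

/-- the isometric affine ℤ-action on ℓ²(ℤ) generated by ξ ↦ Sξ + δ₀ (shift
plus Dirac mass at 0) almost has fixed points, is metrically proper, and in particular
has no global fixed point. The action A : ℤ → ℓ²(ℤ) → ℓ²(ℤ) is characterized by the
action axioms together with the coordinatewise formula for A 1. -/
theorem shift_action_almost_fixed_points_proper
    (A : ℤ → lp (fun _ : ℤ => ℝ) 2 → lp (fun _ : ℤ => ℝ) 2)
    (h0 : ∀ ξ, A 0 ξ = ξ)
    (hadd : ∀ m n : ℤ, ∀ ξ, A (m + n) ξ = A m (A n ξ))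
    (h1 : ∀ (ξ : lp (fun _ : ℤ => ℝ) 2) (n : ℤ),
      (A 1 ξ : ∀ _ : ℤ, ℝ) n = ξ (n - 1) + (if n = 0 then (1 : ℝ) else 0)) :
    (∀ g : ℤ, Isometry (A g)) ∧
    (∀ ε > (0 : ℝ), ∀ F : Finset ℤ, ∃ ξ, ∀ g ∈ F, dist (A g ξ) ξ < ε) ∧
    (∀ (ξ : lp (fun _ : ℤ => ℝ) 2) (R : ℝ), 0 < R →
      {g : ℤ | dist (A g ξ) ξ ≤ R}.Finite) ∧
    ¬ ∃ ξ, ∀ g : ℤ, A g ξ = ξ := by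
  have hA := isometry_act h0 hadd (isometry_shift_act_one h1)
  have hproper (ξ : ℓ²(ℤ, ℝ)) (R : ℝ) : {g : ℤ | dist (A g ξ) ξ ≤ R}.Finite :=
    finite_setOf_dist_act_le_of_forall hA (finite_setOf_dist_shift_act_zero_le h1 h0 hadd) ξ R
  refine ⟨hA, fun ε hε F => exists_forall_dist_act_lt_of_tendsto h0 hadd hA
    (tendsto_dist_shift_act_one_rampLp h1) hε F, fun ξ R _ => hproper ξ R, ?_⟩
  rintro ⟨ξ, hξ⟩
  exact Set.infinite_univ ((hproper ξ 0).subset fun g _ => by simp [hξ g])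
end

section
/- Let G be a finitely generated group acting by isometries on nonempty complete metric spaces (X_k, d_k) for k ∈ ℕ, each action having no global fixed point. Then there exist scaling factors r_k > 0 and base points *_k ∈ X_k such that: (1) for each generator s and each k, r_k d_k(*_k, s·*_k) ≤ 1, so that G acts diagonally on the bounded sequences 𝓑_r; and (2) for every non-principal ultrafilter ω on ℕ, the induced G-action on the ultralimit X_{ω,r} is uniform: there exists ε > 0 (namely 1/2) such that for every point y of X_{ω,r}, max over generators s of d_{ω,r}(y, s·y) ≥ ε. -/
/-!
Let `D_k(x) = max_{s ∈ S} d_k(x, s·x)`; it is positive because the action has no fixed point and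
`S` generates `G`, and continuous because `G` acts by isometries. By an Ekeland-type argument in
the complete space `X_k` there is a point `b_k` that halves `D_k` nowhere within distance
`(k + 1) D_k(b_k)` of itself; rescaling by `r_k = 1 / D_k(b_k)` puts the generators' displacement
of `b_k` at exactly `1`. A point `y` of `𝓑_r` lies within `(k + 1) D_k(b_k)` of `b_k` for all large
`k`, so there some generator moves `y_k` by at least `D_k(b_k) / 2`; as `S` is finite, a single
generator does so `ω`-almost surely.
-/

open Filter Topology

lemma exists_forall_dist_le_imp_le_two_mul {X : Type*} [MetricSpace X] [CompleteSpace X]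
    [Nonempty X] {D : X → ℝ} (hD : Continuous D) (hpos : ∀ x, 0 < D x) {R : ℝ} (hR : 0 ≤ R) :
    ∃ b, ∀ x, dist x b ≤ R * D b → D b ≤ 2 * D x := by
  by_contra! h
  choose f hf_dist hf_half using h
  obtain ⟨x₀⟩ := ‹Nonempty X›
  set x : ℕ → X := fun n => f^[n] x₀
  have hx_succ : ∀ n, x (n + 1) = f (x n) := fun n => Function.iterate_succ_apply' f n x₀
  have hD_le : ∀ n, D (x n) ≤ D x₀ * (1 / 2) ^ n := by
    intro n
    induction n with
    | zero => simp [x]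
    | succ n ih =>
      have := hf_half (x n)
      rw [hx_succ, pow_succ]
      linarith
  have hdist : ∀ n, dist (x n) (x (n + 1)) ≤ R * D x₀ * (1 / 2) ^ n := fun n =>
    calc dist (x n) (x (n + 1)) ≤ R * D (x n) := by rw [dist_comm, hx_succ]; exact hf_dist _
      _ ≤ R * (D x₀ * (1 / 2) ^ n) := mul_le_mul_of_nonneg_left (hD_le n) hR
      _ = R * D x₀ * (1 / 2) ^ n := by ring
  obtain ⟨z, hz⟩ :=
    cauchySeq_tendsto_of_complete (cauchySeq_of_le_geometric _ _ (by norm_num) hdist)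
  have hD_zero : Tendsto (D ∘ x) atTop (𝓝 0) := by
    refine squeeze_zero (fun n => (hpos _).le) hD_le ?_
    simpa using (tendsto_pow_atTop_nhds_zero_of_lt_one (by norm_num : (0 : ℝ) ≤ 1 / 2)
      (by norm_num)).const_mul (D x₀)
  exact (hpos z).ne' (tendsto_nhds_unique ((hD.tendsto z).comp hz) hD_zero)

section Displacement

variable {G X : Type*} [Group G] [MetricSpace X] [MulAction G X] (S : Finset G) (hS : S.Nonempty)

noncomputable def maxDisplacement (x : X) : ℝ :=
  S.sup' hS fun s => dist x (s • x)

lemma dist_smul_le_maxDisplacement {s : G} (hs : s ∈ S) (x : X) :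
    dist x (s • x) ≤ maxDisplacement S hS x :=
  Finset.le_sup' (fun s => dist x (s • x)) hs

lemma exists_maxDisplacement_eq (x : X) : ∃ s ∈ S, maxDisplacement S hS x = dist x (s • x) :=
  Finset.exists_mem_eq_sup' hS _

lemma continuous_maxDisplacement (hcont : ∀ g : G, Continuous fun x : X => g • x) :
    Continuous (maxDisplacement (X := X) S hS) :=
  Continuous.finset_sup'_apply hS fun s _ => continuous_id.dist (hcont s)

lemma maxDisplacement_pos (hgen : Subgroup.closure (S : Set G) = ⊤)
    (hnofix : ¬ ∃ x : X, ∀ g : G, g • x = x) (x : X) : 0 < maxDisplacement S hS x := by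
  by_contra! h
  have hfix : ∀ s ∈ S, s • x = x := fun s hs =>
    (dist_le_zero.1 ((dist_smul_le_maxDisplacement S hS hs x).trans h)).symm
  have hstab : Subgroup.closure (S : Set G) ≤ MulAction.stabilizer G x :=
    (Subgroup.closure_le _).2 hfix
  rw [hgen] at hstab
  exact hnofix ⟨x, fun g => hstab (Subgroup.mem_top g)⟩

lemma exists_half_le_inv_mul_dist_smul {b y : X} {R : ℝ} (hpos : 0 < maxDisplacement S hS b)
    (hb : ∀ x, dist x b ≤ R * maxDisplacement S hS b →
      maxDisplacement S hS b ≤ 2 * maxDisplacement S hS x)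
    (hy : (maxDisplacement S hS b)⁻¹ * dist y b ≤ R) :
    ∃ s ∈ S, 1 / 2 ≤ (maxDisplacement S hS b)⁻¹ * dist y (s • y) := by
  obtain ⟨s, hs, hs_eq⟩ := exists_maxDisplacement_eq S hS y
  refine ⟨s, hs, ?_⟩
  have hhalf := hb y (by rwa [inv_mul_le_iff₀ hpos, mul_comm] at hy)
  rw [← hs_eq, inv_mul_eq_div, le_div_iff₀ hpos]
  linarith

end Displacement

/-- Gromov: if a finitely generated group acts by isometries without
global fixed point on nonempty complete metric spaces X_k, there are scaling factors
r_k > 0 and base points b_k such that (1) r_k d_k(b_k, s·b_k) ≤ 1 for generators s (so G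
acts diagonally on 𝓑_r), and (2) for every non-principal ultrafilter ω the diagonal
action on the ultralimit is uniform: for every y ∈ 𝓑_r some generator moves y by at
least 1/2 in the ultralimit distance. -/
theorem gromov_uniform_ultralimit {G : Type*} [Group G]
    (S : Finset G) (hS : S.Nonempty) (hgen : Subgroup.closure (S : Set G) = ⊤)
    (X : ℕ → Type*) [∀ k, MetricSpace (X k)] [∀ k, Nonempty (X k)]
    [∀ k, CompleteSpace (X k)] [∀ k, MulAction G (X k)]
    (hiso : ∀ (k : ℕ) (g : G), Isometry (fun x : X k => g • x))
    (hnofix : ∀ k : ℕ, ¬ ∃ x : X k, ∀ g : G, g • x = x) :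
    ∃ (r : ℕ → ℝ) (b : ∀ k, X k),
      (∀ k, 0 < r k) ∧
      (∀ s ∈ S, ∀ k, r k * dist (b k) (s • b k) ≤ 1) ∧
      ∀ ω : Ultrafilter ℕ, (∀ n : ℕ, ω ≠ pure n) →
        ∀ y : ∀ k, X k, (∃ C : ℝ, ∀ k, r k * dist (y k) (b k) ≤ C) →
          ∀ l : G → ℝ,
            (∀ s ∈ S, Tendsto (fun k => r k * dist (y k) (s • y k)) ω (nhds (l s))) →
            ∃ s ∈ S, (1 : ℝ) / 2 ≤ l s := by
  set D := fun k => maxDisplacement (X := X k) S hS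
  have hpos : ∀ k x, 0 < D k x := fun k => maxDisplacement_pos S hS hgen (hnofix k)
  choose b hb using fun k : ℕ => exists_forall_dist_le_imp_le_two_mul
    (continuous_maxDisplacement S hS fun g => (hiso k g).continuous) (hpos k)
    (by positivity : (0 : ℝ) ≤ k + 1)
  refine ⟨fun k => (D k (b k))⁻¹, b, fun k => inv_pos.2 (hpos k _), fun s hs k => ?_, ?_⟩
  · rw [inv_mul_le_iff₀ (hpos k _), mul_one]
    exact dist_smul_le_maxDisplacement S hS hs _
  rintro ω hω y ⟨C, hC⟩ l hl
  have hω_cofinite : (ω : Filter ℕ) ≤ cofinite :=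
    ω.le_cofinite_or_eq_pure.resolve_right fun ⟨n, hn⟩ => hω n hn
  have h_eventually : ∀ᶠ k in ω, ∃ s ∈ S, 1 / 2 ≤ (D k (b k))⁻¹ * dist (y k) (s • y k) := by
    refine hω_cofinite ?_
    rw [Nat.cofinite_eq_atTop]
    filter_upwards [eventually_ge_atTop ⌈C⌉₊] with k hk
    refine exists_half_le_inv_mul_dist_smul S hS (hpos k _) (hb k) ((hC k).trans ?_)
    linarith [Nat.le_ceil C, (Nat.cast_le (α := ℝ)).2 hk]
  obtain ⟨s, hs, hs_eventually⟩ :=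
    (Ultrafilter.eventually_exists_mem_iff S.finite_toSet).1 h_eventually
  exact ⟨s, hs, ge_of_tendsto (hl s hs) hs_eventually⟩
end
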